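/- arXiv:1809.06603 — 8 statements merged into one kernel-verified Lean document; each statement's English description precedes it below -/
import Mathlib

section
/- Define f_1(u_1,u_2,v_1,v_2,w_1,w_2) = u_1v_1w_1 - u_1v_2w_2 - u_2v_1w_2 - u_2v_2w_1 - u_2v_2w_2 and f_2(u_1,u_2,v_1,v_2,w_1,w_2) = -u_1v_1w_1 - u_1v_1w_2 - u_1v_2w_1 - u_2v_1w_1 + u_2v_2w_2. Then for all rationals p_1,p_2,q_1,q_2,r_1,r_2, setting a_1=f_1(p_1,p_2,q_1,q_2,r_1,r_2), a_2=f_2(p_1,p_2,q_1,q_2,r_1,r_2), a_3=-a_1-a_2, we have a_1a_2+a_2a_3+a_3a_1 = -(p_1^2+p_1p_2+p_2^2)(q_1^2+q_1q_2+q_2^2)(r_1^2+r_1r_2+r_2^2). -/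
def f1 (u1 u2 v1 v2 w1 w2 : ℚ) : ℚ :=
  u1*v1*w1 - u1*v2*w2 - u2*v1*w2 - u2*v2*w1 - u2*v2*w2

def f2 (u1 u2 v1 v2 w1 w2 : ℚ) : ℚ :=
  -u1*v1*w1 - u1*v1*w2 - u1*v2*w1 - u2*v1*w1 + u2*v2*w2

theorem stmt3 (p1 p2 q1 q2 r1 r2 : ℚ) :
    let a1 := f1 p1 p2 q1 q2 r1 r2
    let a2 := f2 p1 p2 q1 q2 r1 r2
    let a3 := -a1 - a2
    a1*a2 + a2*a3 + a3*a1
      = -((p1^2 + p1*p2 + p2^2) * (q1^2 + q1*q2 + q2^2) * (r1^2 + r1*r2 + r2^2)) := by simp only [f1, f2]; ring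
end

section
/- With f_1, f_2 as defined, and for all rationals p_1,p_2,q_1,q_2,r_1,r_2, the triples (a_1,a_2,-a_1-a_2) and (b_1,b_2,-b_1-b_2) where b_1=f_1(p_2,p_1,q_1,q_2,r_1,r_2) and b_2=f_2(p_2,p_1,q_1,q_2,r_1,r_2) satisfy a_1a_2+a_2a_3+a_3a_1 = b_1b_2+b_2b_3+b_3b_1 (with a_3=-a_1-a_2, b_3=-b_1-b_2). -/
theorem stmt4 (p1 p2 q1 q2 r1 r2 : ℚ) :
    let a1 := f1 p1 p2 q1 q2 r1 r2
    let a2 := f2 p1 p2 q1 q2 r1 r2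
    let a3 := -a1 - a2
    let b1 := f1 p2 p1 q1 q2 r1 r2
    let b2 := f2 p2 p1 q1 q2 r1 r2
    let b3 := -b1 - b2
    a1*a2 + a2*a3 + a3*a1 = b1*b2 + b2*b3 + b3*b1 := by simp only [f1, f2]; ring
end

section
/- Suppose x_1,y_1,z_1,x_2,y_2,z_2 are rationals with x_1^2+y_1^2+z_1^2 = x_2^2+y_2^2+z_2^2 and x_1y_1z_1 = x_2y_2z_2. Define a_1=x_1-y_1-z_1, a_2=y_1-z_1-x_1, a_3=z_1-x_1-y_1, a_4=x_1+y_1+z_1 and similarly b_i from (x_2,y_2,z_2). Then Σ_{i=1}^4 a_i^r = Σ_{i=1}^4 b_i^r for r=1,2,3. -/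
theorem stmt9 (x1 y1 z1 x2 y2 z2 : ℚ)
    (hsq : x1^2 + y1^2 + z1^2 = x2^2 + y2^2 + z2^2)
    (hpr : x1*y1*z1 = x2*y2*z2) :
    let a1 := x1 - y1 - z1; let a2 := y1 - z1 - x1
    let a3 := z1 - x1 - y1; let a4 := x1 + y1 + z1
    let b1 := x2 - y2 - z2; let b2 := y2 - z2 - x2
    let b3 := z2 - x2 - y2; let b4 := x2 + y2 + z2
    (a1 + a2 + a3 + a4 = b1 + b2 + b3 + b4) ∧
    (a1^2 + a2^2 + a3^2 + a4^2 = b1^2 + b2^2 + b3^2 + b4^2) ∧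
    (a1^3 + a2^3 + a3^3 + a4^3 = b1^3 + b2^3 + b3^3 + b4^3) := by
  refine ⟨by ring, by linear_combination 4*hsq, by linear_combination 24*hpr⟩
end

section
/- For every rational p, the triple of triples (x_1,y_1,z_1), (x_2,y_2,z_2), (x_3,y_3,z_3) defined by x_1=2(p^2+1)^3, y_1=-(p-1)(p+1)(p^2-2p-1)(p^2+2p-1), z_1=2p(p^2-2p-1)(p^2+2p-1); x_2=(p^2+1)(p^2+2p-1)^2, y_2=-2(p-1)(p^2+1)(p^2-2p-1), z_2=2p(p+1)(p^2+1)(p^2-2p-1); x_3=(p^2+1)(p^2-2p-1)^2, y_3=2(p+1)(p^2+1)(p^2+2p-1), z_3=-2p(p-1)(p^2+1)(p^2+2p-1) satisfies x_1^2+y_1^2+z_1^2 = x_2^2+y_2^2+z_2^2 = x_3^2+y_3^2+z_3^2 and x_1y_1z_1 = x_2y_2z_2 = x_3y_3z_3. -/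
theorem stmt10 (p : ℚ) :
    let x1 := 2*(p^2+1)^3
    let y1 := -(p-1)*(p+1)*(p^2-2*p-1)*(p^2+2*p-1)
    let z1 := 2*p*(p^2-2*p-1)*(p^2+2*p-1)
    let x2 := (p^2+1)*(p^2+2*p-1)^2
    let y2 := -2*(p-1)*(p^2+1)*(p^2-2*p-1)
    let z2 := 2*p*(p+1)*(p^2+1)*(p^2-2*p-1)
    let x3 := (p^2+1)*(p^2-2*p-1)^2
    let y3 := 2*(p+1)*(p^2+1)*(p^2+2*p-1)
    let z3 := -2*p*(p-1)*(p^2+1)*(p^2+2*p-1)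
    (x1^2 + y1^2 + z1^2 = x2^2 + y2^2 + z2^2) ∧
    (x2^2 + y2^2 + z2^2 = x3^2 + y3^2 + z3^2) ∧
    (x1*y1*z1 = x2*y2*z2) ∧ (x2*y2*z2 = x3*y3*z3) := by
  refine ⟨by ring, by ring, by ring, by ring⟩
end

section
/- Suppose rationals a_1,...,a_4,b_1,...,b_4,c_1,...,c_4 satisfy Σa_i^r = Σb_i^r = Σc_i^r for r=1,2,3, and let A=a_1a_2a_3a_4, B=b_1b_2b_3b_4, C=c_1c_2c_3c_4. Then for all x, 8(2A-B-C)·∏(x-a_i) + (B-C)^2 = 8(2A-B-C)·∏(x-b_i) + (4A-3B-C)^2, and also equals 8(2A-B-C)·∏(x-c_i) + (4A-B-3C)^2. -/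
lemma quartic_shift (x a1 a2 a3 a4 b1 b2 b3 b4 : ℚ)
    (h1 : a1 + a2 + a3 + a4 = b1 + b2 + b3 + b4)
    (h2 : a1^2 + a2^2 + a3^2 + a4^2 = b1^2 + b2^2 + b3^2 + b4^2)
    (h3 : a1^3 + a2^3 + a3^3 + a4^3 = b1^3 + b2^3 + b3^3 + b4^3) :
    (x-a1)*(x-a2)*(x-a3)*(x-a4) - a1*a2*a3*a4
      = (x-b1)*(x-b2)*(x-b3)*(x-b4) - b1*b2*b3*b4 := by
  have he2 : a1*a2 + a1*a3 + a1*a4 + a2*a3 + a2*a4 + a3*a4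
      = b1*b2 + b1*b3 + b1*b4 + b2*b3 + b2*b4 + b3*b4 := by
    linear_combination ((a1+a2+a3+a4+b1+b2+b3+b4)/2)*h1 - (1/2)*h2
  have he3 : a1*a2*a3 + a1*a2*a4 + a1*a3*a4 + a2*a3*a4
      = b1*b2*b3 + b1*b2*b4 + b1*b3*b4 + b2*b3*b4 := by
    linear_combination
      (((a1+a2+a3+a4)^2 + (a1+a2+a3+a4)*(b1+b2+b3+b4) + (b1+b2+b3+b4)^2
        - 3*(b1^2+b2^2+b3^2+b4^2))/6)*h1 - ((a1+a2+a3+a4)/2)*h2 + (1/3)*h3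
  linear_combination (-x^3)*h1 + x^2*he2 + (-x)*he3

theorem stmt11 (a1 a2 a3 a4 b1 b2 b3 b4 c1 c2 c3 c4 : ℚ)
    (h1 : a1 + a2 + a3 + a4 = b1 + b2 + b3 + b4)
    (h1' : b1 + b2 + b3 + b4 = c1 + c2 + c3 + c4)
    (h2 : a1^2 + a2^2 + a3^2 + a4^2 = b1^2 + b2^2 + b3^2 + b4^2)
    (h2' : b1^2 + b2^2 + b3^2 + b4^2 = c1^2 + c2^2 + c3^2 + c4^2)
    (h3 : a1^3 + a2^3 + a3^3 + a4^3 = b1^3 + b2^3 + b3^3 + b4^3)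
    (h3' : b1^3 + b2^3 + b3^3 + b4^3 = c1^3 + c2^3 + c3^3 + c4^3) :
    let A := a1*a2*a3*a4; let B := b1*b2*b3*b4; let C := c1*c2*c3*c4
    ∀ x : ℚ,
      (8*(2*A - B - C) * ((x-a1)*(x-a2)*(x-a3)*(x-a4)) + (B - C)^2
        = 8*(2*A - B - C) * ((x-b1)*(x-b2)*(x-b3)*(x-b4)) + (4*A - 3*B - C)^2) ∧
      (8*(2*A - B - C) * ((x-a1)*(x-a2)*(x-a3)*(x-a4)) + (B - C)^2
        = 8*(2*A - B - C) * ((x-c1)*(x-c2)*(x-c3)*(x-c4)) + (4*A - B - 3*C)^2) := by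
  intro A B C x
  have hab := quartic_shift x a1 a2 a3 a4 b1 b2 b3 b4 h1 h2 h3
  have hac := quartic_shift x a1 a2 a3 a4 c1 c2 c3 c4
    (h1.trans h1') (h2.trans h2') (h3.trans h3')
  constructor
  · linear_combination (8*(2*A - B - C))*hab
  · linear_combination (8*(2*A - B - C))*hac
end

section
/- For all rationals m,n,p,q,r,s,u,v, the twelve numbers a_1=(p+2q)m-(p-q)n, a_2=-(2p+q)m-(p+2q)n, a_3=(p-q)m+(2p+q)n, a_4=(r+2s)u-(r-s)v, a_5=-(2r+s)u-(r+2s)v, a_6=(r-s)u+(2r+s)v, b_1=(p-q)m-(p+2q)n, b_2=-(2p+q)m-(p-q)n, b_3=(p+2q)m+(2p+q)n, b_4=(r-s)u-(r+2s)v, b_5=-(2r+s)u-(r-s)v, b_6=(r+2s)u+(2r+s)v satisfy s_1=t_1, s_2=t_2, and s_1s_3-2s_4 = t_1t_3-2t_4, where s_i, t_i denote the i-th elementary symmetric functions of (a_1,...,a_6) and (b_1,...,b_6) respectively. -/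
def e1 (a1 a2 a3 a4 a5 a6 : ℚ) : ℚ := a1 + a2 + a3 + a4 + a5 + a6
def e2 (a1 a2 a3 a4 a5 a6 : ℚ) : ℚ := a1*a2 + a1*a3 + a1*a4 + a1*a5 + a1*a6 + a2*a3 + a2*a4 + a2*a5 + a2*a6 + a3*a4 + a3*a5 + a3*a6 + a4*a5 + a4*a6 + a5*a6
def e3 (a1 a2 a3 a4 a5 a6 : ℚ) : ℚ := a1*a2*a3 + a1*a2*a4 + a1*a2*a5 + a1*a2*a6 + a1*a3*a4 + a1*a3*a5 + a1*a3*a6 + a1*a4*a5 + a1*a4*a6 + a1*a5*a6 + a2*a3*a4 + a2*a3*a5 + a2*a3*a6 + a2*a4*a5 + a2*a4*a6 + a2*a5*a6 + a3*a4*a5 + a3*a4*a6 + a3*a5*a6 + a4*a5*a6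
def e4 (a1 a2 a3 a4 a5 a6 : ℚ) : ℚ := a1*a2*a3*a4 + a1*a2*a3*a5 + a1*a2*a3*a6 + a1*a2*a4*a5 + a1*a2*a4*a6 + a1*a2*a5*a6 + a1*a3*a4*a5 + a1*a3*a4*a6 + a1*a3*a5*a6 + a1*a4*a5*a6 + a2*a3*a4*a5 + a2*a3*a4*a6 + a2*a3*a5*a6 + a2*a4*a5*a6 + a3*a4*a5*a6
def e5 (a1 a2 a3 a4 a5 a6 : ℚ) : ℚ := a1*a2*a3*a4*a5 + a1*a2*a3*a4*a6 + a1*a2*a3*a5*a6 + a1*a2*a4*a5*a6 + a1*a3*a4*a5*a6 + a2*a3*a4*a5*a6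
def e6 (a1 a2 a3 a4 a5 a6 : ℚ) : ℚ := a1*a2*a3*a4*a5*a6

theorem stmt13 (m n p q r s u v : ℚ) :
    let a1 := (p+2*q)*m - (p-q)*n
    let a2 := -(2*p+q)*m - (p+2*q)*n
    let a3 := (p-q)*m + (2*p+q)*n
    let a4 := (r+2*s)*u - (r-s)*v
    let a5 := -(2*r+s)*u - (r+2*s)*v
    let a6 := (r-s)*u + (2*r+s)*v
    let b1 := (p-q)*m - (p+2*q)*n
    let b2 := -(2*p+q)*m - (p-q)*n
    let b3 := (p+2*q)*m + (2*p+q)*n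
    let b4 := (r-s)*u - (r+2*s)*v
    let b5 := -(2*r+s)*u - (r-s)*v
    let b6 := (r+2*s)*u + (2*r+s)*v
    (e1 a1 a2 a3 a4 a5 a6 = e1 b1 b2 b3 b4 b5 b6) ∧
    (e2 a1 a2 a3 a4 a5 a6 = e2 b1 b2 b3 b4 b5 b6) ∧
    (e1 a1 a2 a3 a4 a5 a6 * e3 a1 a2 a3 a4 a5 a6 - 2 * e4 a1 a2 a3 a4 a5 a6
      = e1 b1 b2 b3 b4 b5 b6 * e3 b1 b2 b3 b4 b5 b6 - 2 * e4 b1 b2 b3 b4 b5 b6) := by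
  refine ⟨by simp only [e1]; ring, by simp only [e2]; ring, by simp only [e1,e3,e4]; ring⟩
end

section
/- For all rationals p,q,r,u,v,w,h_1,h_2, the twelve numbers a_1=h_1p(pq-r^2), a_2=-h_1q(p^2-qr), a_3=h_1r(pr-q^2), a_4=h_2u(uv-w^2), a_5=-h_2v(u^2-vw), a_6=h_2w(uw-v^2), b_1=h_1q(pq-r^2), b_2=-h_1r(p^2-qr), b_3=h_1p(pr-q^2), b_4=h_2v(uv-w^2), b_5=-h_2w(u^2-vw), b_6=h_2u(uw-v^2) satisfy s_1=t_1=0, s_3=t_3, and s_6=t_6, where s_i, t_i are the i-th elementary symmetric functions of the a's and b's respectively. -/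
theorem stmt14 (p q r u v w h1 h2 : ℚ) :
    let a1 := h1*p*(p*q - r^2)
    let a2 := -h1*q*(p^2 - q*r)
    let a3 := h1*r*(p*r - q^2)
    let a4 := h2*u*(u*v - w^2)
    let a5 := -h2*v*(u^2 - v*w)
    let a6 := h2*w*(u*w - v^2)
    let b1 := h1*q*(p*q - r^2)
    let b2 := -h1*r*(p^2 - q*r)
    let b3 := h1*p*(p*r - q^2)
    let b4 := h2*v*(u*v - w^2)
    let b5 := -h2*w*(u^2 - v*w)
    let b6 := h2*u*(u*w - v^2)
    (e1 a1 a2 a3 a4 a5 a6 = 0) ∧ (e1 b1 b2 b3 b4 b5 b6 = 0) ∧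
    (e3 a1 a2 a3 a4 a5 a6 = e3 b1 b2 b3 b4 b5 b6) ∧
    (e6 a1 a2 a3 a4 a5 a6 = e6 b1 b2 b3 b4 b5 b6) := by
  refine ⟨by simp only [e1]; ring, by simp only [e1]; ring, by simp only [e3]; ring, by simp only [e6]; ring⟩
end

section
/- Let a_1,...,a_6, b_1,...,b_6 be rationals with s_1=t_1=0, s_3=t_3, and s_2s_3-2s_5 = t_2t_3-2t_5, and set d_i = s_i - t_i. If d_2 ≠ 0 and h is any rational, then the coefficients of x^6 and x^5 in the degree-8 polynomial φ(x) = {x^4+(d_4x^2+d_5x+d_6)/d_2 + d_2(x^2-h^2)/4}^2 - (x^2-h^2)∏_{i=1}^6(x+a_i) are (2d_2h^2+d_2^2-2d_2s_2+4d_4)/(2d_2) and -(d_2s_3-2d_5)/d_2 respectively, and the coefficient of x^5 equals 0. -/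
open Polynomial

lemma expand16 (u c1 v s1 s2 s3 s4 s5 s6 hh : ℚ) :
    (X^4 + C u * X^2 + C c1 * X + C v)^2
      - (X^2 - C hh) * (X^6 + C s1*X^5 + C s2*X^4 + C s3*X^3 + C s4*X^2 + C s5*X + C s6)
    = C (-s1) * X^7 + C (2*u - s2 + hh) * X^6 + C (2*c1 - s3 + hh*s1) * X^5
      + C (u^2 + 2*v - s4 + hh*s2) * X^4 + C (2*u*c1 - s5 + hh*s3) * X^3
      + C (c1^2 + 2*u*v - s6 + hh*s4) * X^2 + C (2*c1*v + hh*s5) * X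
      + C (v^2 + hh*s6) := by
  simp only [C_add, C_sub, C_mul, C_pow, C_neg, map_ofNat]
  ring

lemma prod6 (a1 a2 a3 a4 a5 a6 : ℚ) :
    (X + C a1)*(X + C a2)*(X + C a3)*(X + C a4)*(X + C a5)*(X + C a6)
    = X^6 + C (e1 a1 a2 a3 a4 a5 a6)*X^5 + C (e2 a1 a2 a3 a4 a5 a6)*X^4
      + C (e3 a1 a2 a3 a4 a5 a6)*X^3 + C (e4 a1 a2 a3 a4 a5 a6)*X^2
      + C (e5 a1 a2 a3 a4 a5 a6)*X + C (e6 a1 a2 a3 a4 a5 a6) := by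
  simp only [e1, e2, e3, e4, e5, e6, C_add, C_mul]
  ring
open Polynomial in
theorem stmt16 (a1 a2 a3 a4 a5 a6 b1 b2 b3 b4 b5 b6 h : ℚ)
    (h1 : e1 a1 a2 a3 a4 a5 a6 = 0) (h1' : e1 b1 b2 b3 b4 b5 b6 = 0)
    (h3 : e3 a1 a2 a3 a4 a5 a6 = e3 b1 b2 b3 b4 b5 b6)
    (h5 : e2 a1 a2 a3 a4 a5 a6 * e3 a1 a2 a3 a4 a5 a6 - 2 * e5 a1 a2 a3 a4 a5 a6
        = e2 b1 b2 b3 b4 b5 b6 * e3 b1 b2 b3 b4 b5 b6 - 2 * e5 b1 b2 b3 b4 b5 b6)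
    (hd2 : e2 a1 a2 a3 a4 a5 a6 - e2 b1 b2 b3 b4 b5 b6 ≠ 0) :
    let s2 := e2 a1 a2 a3 a4 a5 a6
    let s3 := e3 a1 a2 a3 a4 a5 a6
    let d2 := e2 a1 a2 a3 a4 a5 a6 - e2 b1 b2 b3 b4 b5 b6
    let d4 := e4 a1 a2 a3 a4 a5 a6 - e4 b1 b2 b3 b4 b5 b6
    let d5 := e5 a1 a2 a3 a4 a5 a6 - e5 b1 b2 b3 b4 b5 b6
    let d6 := e6 a1 a2 a3 a4 a5 a6 - e6 b1 b2 b3 b4 b5 b6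
    let phi : Polynomial ℚ :=
      (X^4 + C (d4/d2) * X^2 + C (d5/d2) * X + C (d6/d2)
        + C (d2/4) * (X^2 - C (h^2)))^2
      - (X^2 - C (h^2)) * ((X + C a1)*(X + C a2)*(X + C a3)*(X + C a4)*(X + C a5)*(X + C a6))
    (phi.coeff 6 = (2*d2*h^2 + d2^2 - 2*d2*s2 + 4*d4)/(2*d2)) ∧
    (phi.coeff 5 = -(d2*s3 - 2*d5)/d2) ∧
    (phi.coeff 5 = 0) := by
  intro s2 s3 d2 d4 d5 d6 phi
  have hd2' : d2 ≠ 0 := hd2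
  have key : d2 * s3 - 2 * d5 = 0 := by
    show (e2 a1 a2 a3 a4 a5 a6 - e2 b1 b2 b3 b4 b5 b6) * e3 a1 a2 a3 a4 a5 a6
      - 2 * (e5 a1 a2 a3 a4 a5 a6 - e5 b1 b2 b3 b4 b5 b6) = 0
    linear_combination h5 - e2 b1 b2 b3 b4 b5 b6 * h3
  have hA : (X^4 + C (d4/d2) * X^2 + C (d5/d2) * X + C (d6/d2)
      + C (d2/4) * (X^2 - C (h^2)) : ℚ[X])
      = X^4 + C (d2/4 + d4/d2) * X^2 + C (d5/d2) * X + C (d6/d2 - d2/4 * h^2) := by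
    simp only [C_add, C_sub, C_mul]
    try ring
  have hphi : phi
      = C (-(e1 a1 a2 a3 a4 a5 a6)) * X^7
        + C (2*(d2/4 + d4/d2) - e2 a1 a2 a3 a4 a5 a6 + h^2) * X^6
        + C (2*(d5/d2) - e3 a1 a2 a3 a4 a5 a6 + h^2 * e1 a1 a2 a3 a4 a5 a6) * X^5
        + C ((d2/4 + d4/d2)^2 + 2*(d6/d2 - d2/4 * h^2) - e4 a1 a2 a3 a4 a5 a6 + h^2 * e2 a1 a2 a3 a4 a5 a6) * X^4
        + C (2*(d2/4 + d4/d2)*(d5/d2) - e5 a1 a2 a3 a4 a5 a6 + h^2 * e3 a1 a2 a3 a4 a5 a6) * X^3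
        + C ((d5/d2)^2 + 2*(d2/4 + d4/d2)*(d6/d2 - d2/4 * h^2) - e6 a1 a2 a3 a4 a5 a6 + h^2 * e4 a1 a2 a3 a4 a5 a6) * X^2
        + C (2*(d5/d2)*(d6/d2 - d2/4 * h^2) + h^2 * e5 a1 a2 a3 a4 a5 a6) * X
        + C ((d6/d2 - d2/4 * h^2)^2 + h^2 * e6 a1 a2 a3 a4 a5 a6) := by
    show (X^4 + C (d4/d2) * X^2 + C (d5/d2) * X + C (d6/d2)
        + C (d2/4) * (X^2 - C (h^2)))^2
      - (X^2 - C (h^2)) * ((X + C a1)*(X + C a2)*(X + C a3)*(X + C a4)*(X + C a5)*(X + C a6)) = _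
    rw [hA, prod6, expand16]
  refine ⟨?_, ?_, ?_⟩
  · rw [hphi]
    simp only [coeff_add, coeff_C_mul, coeff_X_pow, coeff_X, coeff_C]
    norm_num
    field_simp
    try ring
  · rw [hphi]
    simp only [coeff_add, coeff_C_mul, coeff_X_pow, coeff_X, coeff_C]
    norm_num [h1]
    field_simp
    try ring
  · rw [hphi]
    simp only [coeff_add, coeff_C_mul, coeff_X_pow, coeff_X, coeff_C]
    norm_num [h1]
    have : (2:ℚ)*d5 = d2 * s3 := by linarith [key]
    field_simp
    linarith [key]
end
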